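/- For all real η and θ: γL η θ * D θ + D θ * γR η θ = 0. -/

import Mathlib

open Real Matrix

/-- The chirality matrix `γ5` in the two-dimensional eigenvalue-pair representation. -/
noncomputable def γ5 : Matrix (Fin 2) (Fin 2) ℝ := !![1, 0; 0, -1]

/-- The overlap Dirac operator on a non-zero eigenvalue pair. -/
noncomputable def D (θ : ℝ) : Matrix (Fin 2) (Fin 2) ℝ :=
  (2 * Real.cos θ) • !![Real.cos θ, Real.sin θ; -Real.sin θ, Real.cos θ]

/-- The family of right chiral γ-matrices `γ_R^(η)`. -/
noncomputable def γR (η θ : ℝ) : Matrix (Fin 2) (Fin 2) ℝ :=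
  !![Real.cos ((1 + η) * (θ - π / 2)), Real.sin ((1 + η) * (θ - π / 2));
     Real.sin ((1 + η) * (θ - π / 2)), -Real.cos ((1 + η) * (θ - π / 2))]

/-- The family of left chiral γ-matrices `γ_L^(η) = γ5 γ_R^(−η) γ5`. -/
noncomputable def γL (η θ : ℝ) : Matrix (Fin 2) (Fin 2) ℝ := γ5 * γR (-η) θ * γ5


/-- Reflection of the plane in the line at angle `a / 2`. -/
noncomputable def reflectionMatrix (a : ℝ) : Matrix (Fin 2) (Fin 2) ℝ :=
  !![Real.cos a, Real.sin a; Real.sin a, -Real.cos a]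

noncomputable def rotationMatrix (t : ℝ) : Matrix (Fin 2) (Fin 2) ℝ :=
  !![Real.cos t, -Real.sin t; Real.sin t, Real.cos t]

theorem reflectionMatrix_mul_rotationMatrix (a t : ℝ) :
    reflectionMatrix a * rotationMatrix t = reflectionMatrix (a - t) := by
  ext i j
  fin_cases i <;> fin_cases j <;>
    simp [reflectionMatrix, rotationMatrix, Real.cos_sub, Real.sin_sub] <;> ring

theorem rotationMatrix_mul_reflectionMatrix (t a : ℝ) :
    rotationMatrix t * reflectionMatrix a = reflectionMatrix (a + t) := by
  ext i j
  fin_cases i <;> fin_cases j <;>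
    simp [reflectionMatrix, rotationMatrix, Real.cos_add, Real.sin_add] <;> ring

theorem reflectionMatrix_add_pi (a : ℝ) :
    reflectionMatrix (a + π) = -reflectionMatrix a := by
  simp [reflectionMatrix, Real.cos_add_pi, Real.sin_add_pi]

theorem γ5_mul_reflectionMatrix_mul_γ5 (a : ℝ) :
    γ5 * reflectionMatrix a * γ5 = reflectionMatrix (-a) := by
  ext i j
  fin_cases i <;> fin_cases j <;> simp [γ5, reflectionMatrix]

theorem γR_eq_reflectionMatrix (η θ : ℝ) :
    γR η θ = reflectionMatrix ((1 + η) * (θ - π / 2)) := rfl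

theorem γL_eq_reflectionMatrix (η θ : ℝ) :
    γL η θ = reflectionMatrix (-((1 - η) * (θ - π / 2))) := by
  rw [γL, γR_eq_reflectionMatrix, γ5_mul_reflectionMatrix_mul_γ5, ← sub_eq_add_neg]

theorem D_eq_smul_rotationMatrix (θ : ℝ) :
    D θ = (2 * Real.cos θ) • rotationMatrix (-θ) := by
  simp [D, rotationMatrix]

/-- Lemma B.8 of the paper: the Ginsparg-Wilson equation
`γ_L^(η) D + D γ_R^(η) = 0` holds for the whole family of lattice chiral symmetries. -/
theorem ginsparg_wilson_family (η θ : ℝ) :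
    γL η θ * D θ + D θ * γR η θ = 0 := by
  -- `D θ` is a multiple of a rotation, so both products are reflections
  -- whose angles differ by `π`.
  have hL : γL η θ * rotationMatrix (-θ) =
      reflectionMatrix (η * (θ - π / 2) - π / 2 + π) := by
    rw [γL_eq_reflectionMatrix, reflectionMatrix_mul_rotationMatrix]
    congr 1
    ring
  have hR : rotationMatrix (-θ) * γR η θ = reflectionMatrix (η * (θ - π / 2) - π / 2) := by
    rw [γR_eq_reflectionMatrix, rotationMatrix_mul_reflectionMatrix]
    congr 1
    ring
  rw [D_eq_smul_rotationMatrix, mul_smul_comm, smul_mul_assoc, ← smul_add, hL, hR,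
    reflectionMatrix_add_pi, neg_add_cancel, smul_zero]
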